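/- arXiv:math/0701513 — 5 statements merged into one kernel-verified Lean document; each statement's English description precedes it below -/
import Mathlib

section
/- Let F be a nonzero linear subspace of ℝⁿ and ε > 0. Then min{‖v‖ : v ∈ F, ‖v‖_∞ = ε} = ε/(√n·Ω_F) and max{‖v‖_∞ : v ∈ F, ‖v‖ = ε} = ε·√n·Ω_F (both extrema are attained). -/
open MeasureTheory ProbabilityTheory Real

noncomputable section

/-- Product Gaussian measure `N(f, σ² Iₙ)` on `ℝⁿ`. -/
def gaussP (n : ℕ) (f : Fin n → ℝ) (σ : ℝ) : Measure (Fin n → ℝ) :=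
  Measure.pi fun i => gaussianReal (f i) (Real.toNNReal (σ ^ 2))

/-- Standard normal CDF `Φ`. -/
def stdCDF (x : ℝ) : ℝ := ((gaussianReal 0 1) (Set.Iic x)).toReal

/-- Standard normal density `φ`. -/
def stdPDF (x : ℝ) : ℝ := Real.exp (-(x ^ 2) / 2) / Real.sqrt (2 * Real.pi)

/-- `τ(ε) = Φ(ε/2) - Φ(-ε/2)`. -/
def tau (ε : ℝ) : ℝ := stdCDF (ε / 2) - stdCDF (-(ε / 2))

/-- Inverse of `τ`. -/
def tauInv (p : ℝ) : ℝ := Function.invFun tau p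

/-- Standard normal quantile function `Φ⁻¹`. -/
def PhiInv (p : ℝ) : ℝ := Function.invFun stdCDF p

/-- Normalized Euclidean norm `‖v‖ = √((1/n) ∑ vᵢ²)`. -/
def norm2 (n : ℕ) (v : Fin n → ℝ) : ℝ := Real.sqrt ((∑ i, (v i) ^ 2) / n)

/-- Sup norm `‖v‖_∞ = maxᵢ |vᵢ|`. -/
def normInf (n : ℕ) (v : Fin n → ℝ) : ℝ := ⨆ i, |v i|

/-- Normalized inner product. -/
def inner2 (n : ℕ) (u v : Fin n → ℝ) : ℝ := (∑ i, u i * v i) / n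

/-- Total variation distance between two measures on `ℝⁿ`. -/
def dTV (n : ℕ) (P Q : Measure (Fin n → ℝ)) : ℝ :=
  ⨆ A : {A : Set (Fin n → ℝ) // MeasurableSet A}, |(P A).toReal - (Q A).toReal|

/-- Width of the band `(L, U)` at data `y`. -/
def width (n : ℕ) (L U : (Fin n → ℝ) → Fin n → ℝ) (y : Fin n → ℝ) : ℝ :=
  ⨆ i, (U y i - L y i)

/-- The band `(L,U)` covers `g` at data `y`. -/
def covers (n : ℕ) (L U : (Fin n → ℝ) → Fin n → ℝ) (g y : Fin n → ℝ) : Prop :=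
  ∀ i, L y i ≤ g i ∧ g i ≤ U y i

/-- `P` is the orthogonal projection onto the subspace `F` of `ℝⁿ`. -/
def IsOrthProjOn (n : ℕ) (F : Submodule ℝ (Fin n → ℝ))
    (P : (Fin n → ℝ) →ₗ[ℝ] (Fin n → ℝ)) : Prop :=
  (∀ f, P f ∈ F) ∧ (∀ f, ∀ g ∈ F, inner2 n (f - P f) g = 0)

/-- `Ω_F = max_i ‖Π_F eᵢ‖ / ‖eᵢ‖`. -/
def OmegaF (n : ℕ) (P : (Fin n → ℝ) →ₗ[ℝ] (Fin n → ℝ)) : ℝ :=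
  ⨆ i : Fin n, norm2 n (P (Pi.single i 1)) / norm2 n (Pi.single i 1)

/-- The `p`-quantile of the chi-squared distribution with `m` degrees of freedom. -/
def chiSqQuantile (m : ℕ) (p : ℝ) : ℝ :=
  sInf {t : ℝ | ENNReal.ofReal p ≤
    (Measure.pi fun _ : Fin m => gaussianReal 0 1) {z | ∑ k, (z k) ^ 2 ≤ t}}



namespace NormExtremaAux

variable {n : ℕ}

lemma norm2_nonneg (n : ℕ) (v : Fin n → ℝ) : 0 ≤ norm2 n v := Real.sqrt_nonneg _

lemma norm2_sq (hn : 0 < n) (v : Fin n → ℝ) :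
    (norm2 n v) ^ 2 = (∑ i, v i ^ 2) / n := by
  rw [norm2, Real.sq_sqrt]
  positivity

lemma sum_single_mul (n : ℕ) (v : Fin n → ℝ) (i : Fin n) :
    ∑ j, v j * (Pi.single i 1 : Fin n → ℝ) j = v i := by
  simp [Pi.single_apply]

lemma orth_sum (hn : 0 < n) {F : Submodule ℝ (Fin n → ℝ)}
    {P : (Fin n → ℝ) →ₗ[ℝ] (Fin n → ℝ)} (hP : IsOrthProjOn n F P)
    {f : Fin n → ℝ} (hf : f ∈ F) (x : Fin n → ℝ) :
    ∑ i, f i * x i = ∑ i, f i * P x i := by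
  have h := hP.2 x f hf
  rw [inner2, div_eq_zero_iff] at h
  have hsum : ∑ i, (x i - P x i) * f i = 0 := by
    rcases h with h | h
    · simpa using h
    · exact absurd h (by exact_mod_cast hn.ne')
  have : ∑ i, (x i * f i - P x i * f i) = 0 := by
    simpa [sub_mul] using hsum
  rw [Finset.sum_sub_distrib] at this
  have h2 : ∑ i, x i * f i = ∑ i, P x i * f i := by linarith
  calc ∑ i, f i * x i = ∑ i, x i * f i := by simp [mul_comm]
    _ = ∑ i, P x i * f i := h2
    _ = ∑ i, f i * P x i := by simp [mul_comm]

lemma norm2_single (hn : 0 < n) (i : Fin n) :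
    norm2 n (Pi.single i 1 : Fin n → ℝ) = 1 / Real.sqrt n := by
  have : ∑ j, ((Pi.single i 1 : Fin n → ℝ) j) ^ 2 = 1 := by
    simp [Pi.single_apply]
  rw [norm2, this, one_div, one_div, ← Real.sqrt_inv]

lemma bddAbove_range {α : Type*} [Finite α] (f : α → ℝ) : BddAbove (Set.range f) :=
  (Set.finite_range f).bddAbove

lemma norm2_proj_single_le (hn : 0 < n)
    (P : (Fin n → ℝ) →ₗ[ℝ] (Fin n → ℝ)) (i : Fin n) :
    norm2 n (P (Pi.single i 1)) ≤ OmegaF n P / Real.sqrt n := by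
  have hs : (0:ℝ) < Real.sqrt n := Real.sqrt_pos.2 (by exact_mod_cast hn)
  have h1 : norm2 n (P (Pi.single i 1)) / norm2 n (Pi.single i 1) ≤ OmegaF n P := by
    have : Nonempty (Fin n) := ⟨⟨0, hn⟩⟩
    rw [OmegaF]
    exact le_ciSup (bddAbove_range
      (fun j => norm2 n (P (Pi.single j 1)) / norm2 n (Pi.single j 1))) i
  rw [norm2_single hn i] at h1
  calc norm2 n (P (Pi.single i 1))
      = norm2 n (P (Pi.single i 1)) / (1 / Real.sqrt n) * (1 / Real.sqrt n) := by
        field_simp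
    _ ≤ OmegaF n P * (1 / Real.sqrt n) := by
        apply mul_le_mul_of_nonneg_right h1; positivity
    _ = OmegaF n P / Real.sqrt n := by ring

lemma key_bound (hn : 0 < n) {F : Submodule ℝ (Fin n → ℝ)}
    {P : (Fin n → ℝ) →ₗ[ℝ] (Fin n → ℝ)} (hP : IsOrthProjOn n F P)
    {v : Fin n → ℝ} (hv : v ∈ F) (i : Fin n) :
    |v i| ≤ Real.sqrt n * OmegaF n P * norm2 n v := by
  have hs : (0:ℝ) < Real.sqrt n := Real.sqrt_pos.2 (by exact_mod_cast hn)
  have hvi : v i = ∑ j, v j * P (Pi.single i 1) j := by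
    rw [← orth_sum hn hP hv, sum_single_mul]
  have hcs : (v i) ^ 2 ≤ (∑ j, v j ^ 2) * ∑ j, (P (Pi.single i 1) j) ^ 2 := by
    rw [hvi]; exact Finset.sum_mul_sq_le_sq_mul_sq _ _ _
  have hv2 : ∑ j, v j ^ 2 = n * (norm2 n v) ^ 2 := by
    rw [norm2_sq hn]; field_simp
  have hu2 : ∑ j, (P (Pi.single i 1) j) ^ 2 = n * (norm2 n (P (Pi.single i 1))) ^ 2 := by
    rw [norm2_sq hn]; field_simp
  have hb : (v i) ^ 2 ≤ ((n:ℝ) * norm2 n v * norm2 n (P (Pi.single i 1))) ^ 2 := by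
    rw [hv2, hu2] at hcs; nlinarith [hcs]
  have habs : |v i| ≤ (n:ℝ) * norm2 n v * norm2 n (P (Pi.single i 1)) := by
    have hnn : (0:ℝ) ≤ (n:ℝ) * norm2 n v * norm2 n (P (Pi.single i 1)) := by
      have := norm2_nonneg n v; have := norm2_nonneg n (P (Pi.single i 1)); positivity
    calc |v i| = Real.sqrt ((v i) ^ 2) := (Real.sqrt_sq_eq_abs _).symm
      _ ≤ Real.sqrt (((n:ℝ) * norm2 n v * norm2 n (P (Pi.single i 1))) ^ 2) :=
          Real.sqrt_le_sqrt hb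
      _ = _ := by rw [Real.sqrt_sq hnn]
  have hle := norm2_proj_single_le hn P i
  calc |v i| ≤ (n:ℝ) * norm2 n v * norm2 n (P (Pi.single i 1)) := habs
    _ ≤ (n:ℝ) * norm2 n v * (OmegaF n P / Real.sqrt n) := by
        apply mul_le_mul_of_nonneg_left hle
        have := norm2_nonneg n v; positivity
    _ = Real.sqrt n * OmegaF n P * norm2 n v := by
        have hsq : Real.sqrt n * Real.sqrt n = (n:ℝ) :=
          Real.mul_self_sqrt (by positivity)
        field_simp
        linear_combination (-(norm2 n v * OmegaF n P)) * hsq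

lemma normInf_le_of_mem (hn : 0 < n) {F : Submodule ℝ (Fin n → ℝ)}
    {P : (Fin n → ℝ) →ₗ[ℝ] (Fin n → ℝ)} (hP : IsOrthProjOn n F P)
    {v : Fin n → ℝ} (hv : v ∈ F) :
    normInf n v ≤ Real.sqrt n * OmegaF n P * norm2 n v := by
  have : Nonempty (Fin n) := ⟨⟨0, hn⟩⟩
  exact ciSup_le fun i => key_bound hn hP hv i

lemma omega_pos (hn : 0 < n) {F : Submodule ℝ (Fin n → ℝ)} (hF : F ≠ ⊥)
    {P : (Fin n → ℝ) →ₗ[ℝ] (Fin n → ℝ)} (hP : IsOrthProjOn n F P) :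
    0 < OmegaF n P := by
  obtain ⟨f, hf, hf0⟩ := Submodule.exists_mem_ne_zero_of_ne_bot hF
  obtain ⟨i, hi⟩ := Function.ne_iff.1 hf0
  have h1 : 0 < |f i| := by simpa [abs_pos] using hi
  have h2 := key_bound hn hP hf i
  have h3 := norm2_nonneg n f
  have h4 := Real.sqrt_nonneg (n : ℝ)
  nlinarith [mul_nonneg h4 h3]

lemma exists_extremal (hn : 0 < n) {F : Submodule ℝ (Fin n → ℝ)}
    {P : (Fin n → ℝ) →ₗ[ℝ] (Fin n → ℝ)} (hP : IsOrthProjOn n F P) :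
    ∃ u ∈ F, norm2 n u = OmegaF n P / Real.sqrt n ∧ normInf n u = (OmegaF n P) ^ 2 := by
  have hne : Nonempty (Fin n) := ⟨⟨0, hn⟩⟩
  have hs : (0:ℝ) < Real.sqrt n := Real.sqrt_pos.2 (by exact_mod_cast hn)
  obtain ⟨i, hi⟩ : ∃ i : Fin n,
      norm2 n (P (Pi.single i 1)) / norm2 n (Pi.single i 1) = OmegaF n P := by
    rw [OmegaF]; exact exists_eq_ciSup_of_finite
  set u := P (Pi.single i 1) with hu
  have huF : u ∈ F := hP.1 _
  have hsingle := norm2_single hn i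
  rw [hsingle] at hi
  have hu2 : norm2 n u = OmegaF n P / Real.sqrt n := by
    field_simp at hi ⊢
    linarith
  refine ⟨u, huF, hu2, ?_⟩
  have hui : u i = (OmegaF n P) ^ 2 := by
    have e1 : u i = ∑ j, u j * (Pi.single i 1 : Fin n → ℝ) j :=
      (sum_single_mul n u i).symm
    have e2 : ∑ j, u j * (Pi.single i 1 : Fin n → ℝ) j = ∑ j, u j * u j := by
      rw [orth_sum hn hP huF]
    have e3 : ∑ j, u j * u j = (n:ℝ) * (norm2 n u) ^ 2 := by
      have : ∑ j, u j * u j = ∑ j, u j ^ 2 := by simp [sq]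
      rw [this, norm2_sq hn]; field_simp
    rw [e1, e2, e3, hu2]
    rw [div_pow, Real.sq_sqrt (by positivity : (0:ℝ) ≤ (n:ℝ))]
    field_simp
  apply le_antisymm
  · have hle := normInf_le_of_mem hn hP huF
    rw [hu2] at hle
    calc normInf n u ≤ Real.sqrt n * OmegaF n P * (OmegaF n P / Real.sqrt n) := hle
      _ = (OmegaF n P) ^ 2 := by field_simp
  · have : |u i| ≤ normInf n u := le_ciSup (bddAbove_range fun j => |u j|) i
    rw [hui, abs_of_nonneg (sq_nonneg _)] at this
    exact this

lemma norm2_smul (hn : 0 < n) {c : ℝ} (hc : 0 ≤ c) (v : Fin n → ℝ) :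
    norm2 n (c • v) = c * norm2 n v := by
  rw [norm2, norm2]
  have h : ∑ i, (c • v) i ^ 2 = c ^ 2 * ∑ i, v i ^ 2 := by
    rw [Finset.mul_sum]
    refine Finset.sum_congr rfl fun i _ => ?_
    simp [mul_pow]
  rw [h, mul_div_assoc, Real.sqrt_mul (sq_nonneg c), Real.sqrt_sq hc]

lemma normInf_smul {c : ℝ} (hc : 0 ≤ c) (v : Fin n → ℝ) :
    normInf n (c • v) = c * normInf n v := by
  rw [normInf, normInf, Real.mul_iSup_of_nonneg hc]
  congr 1
  funext i
  simp [abs_mul, abs_of_nonneg hc]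

end NormExtremaAux

/-- extremal relations between the normalized Euclidean norm and the
sup norm on a nonzero subspace `F`, in terms of `Ω_F`. Both extrema are attained. -/
theorem norm_extrema_on_subspace (n : ℕ) (hn : 1 ≤ n)
    (F : Submodule ℝ (Fin n → ℝ)) (hF : F ≠ ⊥)
    (P : (Fin n → ℝ) →ₗ[ℝ] (Fin n → ℝ)) (hP : IsOrthProjOn n F P)
    (ε : ℝ) (hε : 0 < ε) :
    IsLeast {r : ℝ | ∃ v ∈ F, normInf n v = ε ∧ r = norm2 n v}
        (ε / (Real.sqrt n * OmegaF n P)) ∧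
    IsGreatest {r : ℝ | ∃ v ∈ F, norm2 n v = ε ∧ r = normInf n v}
        (ε * Real.sqrt n * OmegaF n P) := by
  open NormExtremaAux in
  have hn0 : 0 < n := hn
  have hs : (0:ℝ) < Real.sqrt n := Real.sqrt_pos.2 (by exact_mod_cast hn0)
  have hΩ : 0 < OmegaF n P := omega_pos hn0 hF hP
  obtain ⟨u, huF, hu2, huInf⟩ := exists_extremal hn0 hP
  constructor
  · constructor
    · refine ⟨(ε / (OmegaF n P) ^ 2) • u, F.smul_mem _ huF, ?_, ?_⟩
      · rw [normInf_smul (by positivity) u, huInf]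
        field_simp
      · rw [norm2_smul hn0 (by positivity) u, hu2]
        field_simp
    · rintro r ⟨v, hv, hinf, rfl⟩
      have h := normInf_le_of_mem hn0 hP hv
      rw [hinf] at h
      rw [div_le_iff₀ (by positivity)]
      linarith [mul_comm (norm2 n v) (Real.sqrt n * OmegaF n P)]
  · constructor
    · refine ⟨(ε * Real.sqrt n / OmegaF n P) • u, F.smul_mem _ huF, ?_, ?_⟩
      · rw [norm2_smul hn0 (by positivity) u, hu2]
        field_simp
      · rw [normInf_smul (by positivity) u, huInf]
        field_simp
    · rintro r ⟨v, hv, h2, rfl⟩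
      calc normInf n v ≤ Real.sqrt n * OmegaF n P * norm2 n v := normInf_le_of_mem hn0 hP hv
        _ = ε * Real.sqrt n * OmegaF n P := by rw [h2]; ring

end
end

section
/- Take σ = 1. Let F ⊆ ℝⁿ be a linear subspace of dimension d < n with orthogonal projection Π_F, let 0 < ξ < 1 and 0 < δ < 1 − ξ, and set ε = (n−d)^{1/4} · n^{−1/2} · (2·log(1 + 4δ²))^{1/4}. Let A = {f ∈ ℝⁿ : ‖f − Π_F f‖ > ε}. Then for every Borel measurable test φ : ℝⁿ → {0,1} satisfying sup_{f∈F} P_f(φ(Y) = 1) ≤ ξ, one has sup_{f∈A} P_f(φ(Y) = 0) ≥ 1 − ξ − δ. -/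
open MeasureTheory ProbabilityTheory Real

noncomputable section

/-!
Ingster's `χ²` method. Let `m = n - d` and let `w₁, …, wₘ` be orthonormal in `Fᗮ`. Under the
uniform prior on the `2 ^ m` alternatives `θ_η = ρ ∑ ηⱼ wⱼ`, `η ∈ {±1}ᵐ`, the mixture likelihood
ratio `T` satisfies `E₀ T² = 2⁻²ᵐ ∑_{η,η'} exp ⟪θ_η, θ_η'⟫ = cosh (ρ²) ^ m ≤ exp (m ρ⁴ / 2)`.
As the total variation distance is at most `√(E₀ T² - 1) / 2`, the average of `P_θ_η(S)` exceeds
`P₀(S) ≤ ξ` by at most `δ'` once `m ρ⁴ = 2 log (1 + 4 δ'²)`. So some `θ_η` has type II error at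
least `1 - ξ - δ'`, while `‖θ_η‖ = ρ √(m / n)` exceeds `ε` for every `δ' > δ`.
-/

open Matrix Finset
open scoped ENNReal

section ChiSquare

variable {α : Type*} [MeasurableSpace α] {μ : Measure α}

lemma abs_setIntegral_le_half_integral_abs {f : α → ℝ} (hf : Integrable f μ)
    (hf0 : ∫ x, f x ∂μ = 0) {S : Set α} (hS : MeasurableSet S) :
    |∫ x in S, f x ∂μ| ≤ (∫ x, |f x| ∂μ) / 2 := by
  have hcompl : ∫ x in Sᶜ, f x ∂μ = -∫ x in S, f x ∂μ := by
    linarith [integral_add_compl hS hf]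
  have hS_le : |∫ x in S, f x ∂μ| ≤ ∫ x in S, |f x| ∂μ := abs_integral_le_integral_abs
  have hSc_le : |∫ x in Sᶜ, f x ∂μ| ≤ ∫ x in Sᶜ, |f x| ∂μ := abs_integral_le_integral_abs
  rw [hcompl, abs_neg] at hSc_le
  linarith [integral_add_compl hS hf.abs]

lemma integral_abs_le_sqrt_integral_sq [IsProbabilityMeasure μ] {f : α → ℝ} (hf : MemLp f 2 μ) :
    ∫ x, |f x| ∂μ ≤ √(∫ x, f x ^ 2 ∂μ) := by
  have hvar := variance_nonneg |f| μ
  rw [variance_eq_sub hf.abs] at hvar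
  simp only [Pi.pow_apply, Pi.abs_apply, sq_abs] at hvar
  exact le_sqrt_of_sq_le (by linarith)

/-- The total variation distance is at most half the square root of the `χ²`-divergence. -/
lemma abs_setIntegral_sub_measureReal_le [IsProbabilityMeasure μ] {g : α → ℝ} (hg : MemLp g 2 μ)
    (hg1 : ∫ x, g x ∂μ = 1) {S : Set α} (hS : MeasurableSet S) :
    |∫ x in S, g x ∂μ - μ.real S| ≤ √(∫ x, g x ^ 2 ∂μ - 1) / 2 := by
  have hint := hg.integrable one_le_two
  have hh : MemLp (fun x => g x - 1) 2 μ := hg.sub (memLp_const 1)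
  have hh0 : ∫ x, (g x - 1) ∂μ = 0 := by
    rw [integral_sub hint (integrable_const 1), hg1, integral_const, probReal_univ, one_smul,
      sub_self]
  have hh2 : ∫ x, (g x - 1) ^ 2 ∂μ = ∫ x, g x ^ 2 ∂μ - 1 := by
    have hexp : ∀ x, (g x - 1) ^ 2 = g x ^ 2 - 2 * g x + 1 := fun x => by ring
    simp_rw [hexp]
    rw [integral_add (f := fun x => g x ^ 2 - 2 * g x) (hg.integrable_sq.sub (hint.const_mul 2))
      (integrable_const 1), integral_sub hg.integrable_sq (hint.const_mul 2), integral_const_mul,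
      hg1, integral_const, probReal_univ, one_smul]
    ring
  have hS_sub : ∫ x in S, (g x - 1) ∂μ = ∫ x in S, g x ∂μ - μ.real S := by
    rw [integral_sub hint.integrableOn (integrable_const 1), setIntegral_const, smul_eq_mul,
      mul_one]
  calc |∫ x in S, g x ∂μ - μ.real S|
      = |∫ x in S, (g x - 1) ∂μ| := by rw [hS_sub]
    _ ≤ (∫ x, |g x - 1| ∂μ) / 2 :=
      abs_setIntegral_le_half_integral_abs (hh.integrable one_le_two) hh0 hS
    _ ≤ √(∫ x, g x ^ 2 ∂μ - 1) / 2 := by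
      rw [← hh2]
      gcongr
      exact integral_abs_le_sqrt_integral_sq hh

end ChiSquare

lemma indicator_univ_pi_prod {ι : Type*} [Fintype ι] {α : ι → Type*} (s : ∀ i, Set (α i))
    (g : ∀ i, α i → ℝ≥0∞) (y : ∀ i, α i) :
    (Set.univ.pi s).indicator (fun y => ∏ i, g i (y i)) y = ∏ i, (s i).indicator (g i) (y i) := by
  classical
  simp only [Set.indicator_apply, Set.mem_univ_pi, Fintype.prod_ite_zero]

lemma gaussianReal_eq_withDensity_exp (a : ℝ) :
    gaussianReal a 1 =
      (gaussianReal 0 1).withDensity fun x => ENNReal.ofReal (exp (a * x - a ^ 2 / 2)) := by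
  rw [gaussianReal_of_var_ne_zero _ one_ne_zero, gaussianReal_of_var_ne_zero _ one_ne_zero,
    ← withDensity_mul _ (measurable_gaussianPDF _ _)
      (by fun_prop : Measurable fun x => ENNReal.ofReal (exp (a * x - a ^ 2 / 2)))]
  congr 1
  funext x
  rw [Pi.mul_apply, gaussianPDF, gaussianPDF, ← ENNReal.ofReal_mul (gaussianPDFReal_nonneg _ _ _)]
  simp only [gaussianPDFReal, NNReal.coe_one, mul_assoc, ← exp_add]
  ring_nf

instance (n : ℕ) (f : Fin n → ℝ) (σ : ℝ) : IsProbabilityMeasure (gaussP n f σ) := by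
  unfold gaussP
  infer_instance

section GaussianSequence

variable {n : ℕ}

lemma gaussP_one (a : Fin n → ℝ) : gaussP n a 1 = Measure.pi fun i => gaussianReal (a i) 1 := by
  simp [gaussP]

def gaussLR (a y : Fin n → ℝ) : ℝ := exp (a ⬝ᵥ y - a ⬝ᵥ a / 2)

lemma gaussLR_eq_prod (a y : Fin n → ℝ) : gaussLR a y = ∏ i, exp (a i * y i - a i ^ 2 / 2) := by
  rw [gaussLR, ← exp_sum, sum_sub_distrib, ← sum_div]
  simp only [dotProduct, sq]

lemma gaussLR_pos (a y : Fin n → ℝ) : 0 < gaussLR a y := exp_pos _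

lemma measurable_gaussLR (a : Fin n → ℝ) : Measurable (gaussLR a) := by
  unfold gaussLR dotProduct
  fun_prop

lemma gaussLR_mul_gaussLR (a b y : Fin n → ℝ) :
    gaussLR a y * gaussLR b y = exp (a ⬝ᵥ b) * gaussLR (a + b) y := by
  simp only [gaussLR, ← exp_add, add_dotProduct, dotProduct_add, dotProduct_comm b a]
  ring_nf

lemma gaussP_one_eq_withDensity (a : Fin n → ℝ) :
    gaussP n a 1 = (gaussP n 0 1).withDensity fun y => ENNReal.ofReal (gaussLR a y) := by
  set g : Fin n → ℝ → ℝ≥0∞ := fun i x => ENNReal.ofReal (exp (a i * x - a i ^ 2 / 2))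
  have hg : ∀ i, Measurable (g i) := fun i => by fun_prop
  have hLR : (fun y => ENNReal.ofReal (gaussLR a y)) = fun y => ∏ i, g i (y i) := by
    funext y
    rw [gaussLR_eq_prod, ENNReal.ofReal_prod_of_nonneg fun i _ => (exp_pos _).le]
  rw [gaussP_one, gaussP_one, hLR]
  refine Measure.pi_eq fun s hs => ?_
  rw [withDensity_apply _ (.univ_pi hs), ← lintegral_indicator (.univ_pi hs)]
  simp_rw [indicator_univ_pi_prod]
  rw [lintegral_prod_eq_prod_lintegral_of_indepFun _ _
    (iIndepFun_pi fun i => ((hg i).indicator (hs i)).aemeasurable)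
    fun i => ((hg i).indicator (hs i)).comp (measurable_pi_apply i)]
  refine prod_congr rfl fun i _ => ?_
  rw [gaussianReal_eq_withDensity_exp, withDensity_apply _ (hs i), ← lintegral_indicator (hs i)]
  exact (measurePreserving_eval _ i).lintegral_comp ((hg i).indicator (hs i))

lemma setLIntegral_gaussLR (a : Fin n → ℝ) {S : Set (Fin n → ℝ)} (hS : MeasurableSet S) :
    ∫⁻ y in S, ENNReal.ofReal (gaussLR a y) ∂gaussP n 0 1 = gaussP n a 1 S := by
  rw [gaussP_one_eq_withDensity a, withDensity_apply _ hS]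

lemma integrable_gaussLR (a : Fin n → ℝ) : Integrable (gaussLR a) (gaussP n 0 1) := by
  refine (lintegral_ofReal_ne_top_iff_integrable (measurable_gaussLR a).aestronglyMeasurable
    (.of_forall fun y => (gaussLR_pos a y).le)).1 ?_
  rw [← setLIntegral_univ, setLIntegral_gaussLR a .univ]
  exact measure_ne_top _ _

lemma setIntegral_gaussLR (a : Fin n → ℝ) {S : Set (Fin n → ℝ)} (hS : MeasurableSet S) :
    ∫ y in S, gaussLR a y ∂gaussP n 0 1 = (gaussP n a 1).real S := by
  rw [integral_eq_lintegral_of_nonneg_ae (.of_forall fun y => (gaussLR_pos a y).le)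
    (measurable_gaussLR a).aestronglyMeasurable, setLIntegral_gaussLR a hS, measureReal_def]

lemma integral_gaussLR (a : Fin n → ℝ) : ∫ y, gaussLR a y ∂gaussP n 0 1 = 1 := by
  rw [← setIntegral_univ, setIntegral_gaussLR a .univ, probReal_univ]

lemma integrable_gaussLR_mul (a b : Fin n → ℝ) :
    Integrable (fun y => gaussLR a y * gaussLR b y) (gaussP n 0 1) := by
  simp_rw [gaussLR_mul_gaussLR]
  exact (integrable_gaussLR _).const_mul _

lemma integral_gaussLR_mul (a b : Fin n → ℝ) :
    ∫ y, gaussLR a y * gaussLR b y ∂gaussP n 0 1 = exp (a ⬝ᵥ b) := by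
  simp_rw [gaussLR_mul_gaussLR]
  rw [integral_const_mul, integral_gaussLR, mul_one]

lemma memLp_gaussLR (a : Fin n → ℝ) : MemLp (gaussLR a) 2 (gaussP n 0 1) :=
  (memLp_two_iff_integrable_sq (measurable_gaussLR a).aestronglyMeasurable).2 <| by
    simpa only [sq] using integrable_gaussLR_mul a a

theorem exists_gaussP_le_add_sqrt {ι : Type*} [Fintype ι] [Nonempty ι] (a : ι → Fin n → ℝ)
    {S : Set (Fin n → ℝ)} (hS : MeasurableSet S) :
    ∃ i, (gaussP n (a i) 1).real S ≤ (gaussP n 0 1).real S +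
      √((∑ i, ∑ j, exp (a i ⬝ᵥ a j)) / (Fintype.card ι : ℝ) ^ 2 - 1) / 2 := by
  set N : ℝ := (Fintype.card ι : ℝ)
  have hN : 0 < N := Nat.cast_pos.2 Fintype.card_pos
  set T : (Fin n → ℝ) → ℝ := fun y => (∑ i, gaussLR (a i) y) / N
  have hT : MemLp T 2 (gaussP n 0 1) := by
    simpa only [T, div_eq_mul_inv] using
      (memLp_finsetSum _ fun i _ => memLp_gaussLR (a i)).mul_const N⁻¹
  have hT1 : ∫ y, T y ∂gaussP n 0 1 = 1 := by
    rw [integral_div, integral_finsetSum _ fun i _ => integrable_gaussLR (a i)]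
    simp [integral_gaussLR, N, hN.ne']
  have hT2 : ∫ y, T y ^ 2 ∂gaussP n 0 1 = (∑ i, ∑ j, exp (a i ⬝ᵥ a j)) / N ^ 2 := by
    simp_rw [T, div_pow, sq, sum_mul_sum]
    rw [integral_div, integral_finsetSum _ fun i _ =>
      integrable_finsetSum _ fun j _ => integrable_gaussLR_mul (a i) (a j)]
    simp_rw [integral_finsetSum _ fun j _ => integrable_gaussLR_mul _ (a j), integral_gaussLR_mul]
  have hTS : ∫ y in S, T y ∂gaussP n 0 1 = (∑ i, (gaussP n (a i) 1).real S) / N := by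
    rw [integral_div, integral_finsetSum _ fun i _ => (integrable_gaussLR (a i)).integrableOn]
    simp_rw [setIntegral_gaussLR _ hS]
  have hmean := (abs_le.1 (abs_setIntegral_sub_measureReal_le hT hT1 hS)).2
  rw [hT2, hTS, sub_le_iff_le_add, div_le_iff₀ hN] at hmean
  obtain ⟨i, -, hi⟩ := exists_le_of_sum_le univ_nonempty <| hmean.trans_eq <| by
    rw [sum_const, card_univ, nsmul_eq_mul, mul_comm]
  exact ⟨i, by linarith⟩

lemma sum_pi_sum_pi_prod_eq_pow {ι κ : Type*} [Fintype ι] [DecidableEq ι] [Fintype κ]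
    (h : κ → κ → ℝ) :
    ∑ η : ι → κ, ∑ η' : ι → κ, ∏ j, h (η j) (η' j) = (∑ p, ∑ q, h p q) ^ Fintype.card ι :=
  calc ∑ η : ι → κ, ∑ η' : ι → κ, ∏ j, h (η j) (η' j)
      = ∑ η : ι → κ, ∏ j, ∑ q, h (η j) q :=
        sum_congr rfl fun η _ => (Fintype.prod_sum fun j q => h (η j) q).symm
    _ = ∏ _j : ι, ∑ p, ∑ q, h p q := (Fintype.prod_sum fun _ p => ∑ q, h p q).symm
    _ = (∑ p, ∑ q, h p q) ^ Fintype.card ι := by rw [prod_const, card_univ]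

def signVec {ι : Type*} (η : ι → ℤˣ) : ι → ℝ := fun j => ((η j : ℤ) : ℝ)

lemma signVec_dotProduct_self {m : ℕ} (η : Fin m → ℤˣ) : signVec η ⬝ᵥ signVec η = m := by
  have hsq : ∀ u : ℤˣ, ((u : ℤ) : ℝ) * ((u : ℤ) : ℝ) = 1 := fun u => by
    rw [← Int.cast_mul, ← Units.val_mul, Int.units_mul_self, Units.val_one, Int.cast_one]
  simp [dotProduct, signVec, hsq]

lemma sum_sum_exp_mul_signVec_dotProduct (m : ℕ) (t : ℝ) :
    ∑ η : Fin m → ℤˣ, ∑ η' : Fin m → ℤˣ, exp (t * (signVec η ⬝ᵥ signVec η')) =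
      (4 * cosh t) ^ m := by
  have hprod : ∀ η η' : Fin m → ℤˣ, exp (t * (signVec η ⬝ᵥ signVec η')) =
      ∏ j, exp (t * (((η j : ℤ) : ℝ) * ((η' j : ℤ) : ℝ))) := fun η η' => by
    rw [dotProduct, mul_sum, exp_sum]
    rfl
  simp_rw [hprod]
  refine (sum_pi_sum_pi_prod_eq_pow fun p q : ℤˣ =>
    exp (t * (((p : ℤ) : ℝ) * ((q : ℤ) : ℝ)))).trans ?_
  rw [Fintype.card_fin, UnitsInt.univ]
  congr 1
  have hne : (1 : ℤˣ) ≠ -1 := by decide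
  simp only [sum_pair hne, Units.val_one, Units.val_neg, Int.cast_one, Int.cast_neg, cosh_eq]
  ring_nf

lemma vecMul_dotProduct_vecMul {m : ℕ} {W : Matrix (Fin m) (Fin n) ℝ} (hW : W * Wᵀ = 1)
    (u v : Fin m → ℝ) : (u ᵥ* W) ⬝ᵥ (v ᵥ* W) = u ⬝ᵥ v := by
  rw [← dotProduct_mulVec, ← mulVec_transpose, mulVec_mulVec, hW, one_mulVec]

theorem exists_sign_gaussP_le {m : ℕ} {W : Matrix (Fin m) (Fin n) ℝ} (hW : W * Wᵀ = 1) (ρ : ℝ)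
    {S : Set (Fin n → ℝ)} (hS : MeasurableSet S) :
    ∃ η : Fin m → ℤˣ, (gaussP n (ρ • (signVec η ᵥ* W)) 1).real S ≤
      (gaussP n 0 1).real S + √(cosh (ρ ^ 2) ^ m - 1) / 2 := by
  obtain ⟨η, hη⟩ := exists_gaussP_le_add_sqrt (fun η : Fin m → ℤˣ => ρ • (signVec η ᵥ* W)) hS
  refine ⟨η, hη.trans_eq ?_⟩
  simp_rw [smul_dotProduct, dotProduct_smul, vecMul_dotProduct_vecMul hW, smul_eq_mul, ← mul_assoc,
    ← sq, sum_sum_exp_mul_signVec_dotProduct, Fintype.card_fun, Fintype.card_units_int,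
    Fintype.card_fin]
  congr 4
  rw [mul_pow, Nat.cast_pow, ← pow_mul, pow_mul']
  norm_num

lemma exists_mul_transpose_eq_one_mulVec_eq_zero {d : ℕ} (F : Submodule ℝ (Fin n → ℝ))
    (hdim : Module.finrank ℝ F = d) :
    ∃ W : Matrix (Fin (n - d)) (Fin n) ℝ, W * Wᵀ = 1 ∧ ∀ g ∈ F, W *ᵥ g = 0 := by
  set F' : Submodule ℝ (EuclideanSpace ℝ (Fin n)) :=
    F.map (WithLp.linearEquiv 2 ℝ (Fin n → ℝ)).symm.toLinearMap
  have hF' : Module.finrank ℝ F' = d := (LinearEquiv.finrank_map_eq _ F).trans hdim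
  have hK : Module.finrank ℝ F'ᗮ = n - d := by
    have := F'.finrank_add_finrank_orthogonal
    rw [hF', finrank_euclideanSpace_fin] at this
    omega
  set b := (stdOrthonormalBasis ℝ F'ᗮ).reindex (finCongr hK)
  have hinner : ∀ (j : Fin (n - d)) (x : EuclideanSpace ℝ (Fin n)),
      inner ℝ (b j : EuclideanSpace ℝ (Fin n)) x = ∑ i, (b j : EuclideanSpace ℝ (Fin n)) i * x i :=
    fun j x => by simp [PiLp.inner_apply, mul_comm]
  refine ⟨Matrix.of fun j i => (b j : EuclideanSpace ℝ (Fin n)) i, ?_, fun g hg => ?_⟩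
  · ext j k
    rw [mul_apply, one_apply]
    simp only [transpose_apply, of_apply]
    rw [← hinner, ← Submodule.coe_inner, orthonormal_iff_ite.1 b.orthonormal]
  · ext j
    rw [mulVec, dotProduct, Pi.zero_apply]
    exact (hinner j (WithLp.toLp 2 g)).symm.trans
      (Submodule.inner_left_of_mem_orthogonal (Submodule.mem_map_of_mem hg) (b j).2)

lemma IsOrthProjOn.apply_eq_zero {F : Submodule ℝ (Fin n → ℝ)}
    {P : (Fin n → ℝ) →ₗ[ℝ] (Fin n → ℝ)} (hP : IsOrthProjOn n F P) {f : Fin n → ℝ}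
    (hf : ∀ g ∈ F, f ⬝ᵥ g = 0) : P f = 0 := by
  rcases Nat.eq_zero_or_pos n with rfl | hn
  · exact Subsingleton.elim _ _
  have horth := hP.2 f (P f) (hP.1 f)
  rw [inner2, div_eq_zero_iff, Nat.cast_eq_zero, or_iff_left hn.ne'] at horth
  change (f - P f) ⬝ᵥ P f = 0 at horth
  rw [sub_dotProduct, hf _ (hP.1 f), zero_sub, neg_eq_zero] at horth
  exact dotProduct_self_eq_zero.1 horth

lemma norm2_eq_sqrt_dotProduct (v : Fin n → ℝ) : norm2 n v = √(v ⬝ᵥ v / n) := by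
  simp only [norm2, dotProduct, sq]

theorem exists_orthogonal_gaussP_le {d : ℕ} {F : Submodule ℝ (Fin n → ℝ)}
    (hdim : Module.finrank ℝ F = d) (ρ : ℝ) {S : Set (Fin n → ℝ)} (hS : MeasurableSet S) :
    ∃ f : Fin n → ℝ, (∀ g ∈ F, f ⬝ᵥ g = 0) ∧ f ⬝ᵥ f = ρ ^ 2 * (n - d : ℕ) ∧
      (gaussP n f 1).real S ≤ (gaussP n 0 1).real S + √(cosh (ρ ^ 2) ^ (n - d) - 1) / 2 := by
  obtain ⟨W, hW, hWF⟩ := exists_mul_transpose_eq_one_mulVec_eq_zero F hdim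
  obtain ⟨η, hη⟩ := exists_sign_gaussP_le hW ρ hS
  refine ⟨ρ • (signVec η ᵥ* W), fun g hg => ?_, ?_, hη⟩
  · rw [smul_dotProduct, ← dotProduct_mulVec, hWF g hg, dotProduct_zero, smul_zero]
  · rw [smul_dotProduct, dotProduct_smul, vecMul_dotProduct_vecMul hW, signVec_dotProduct_self,
      smul_eq_mul, smul_eq_mul, ← mul_assoc, sq]

lemma sqrt_cosh_pow_sub_one_le {m : ℕ} (hm : 0 < m) {δ : ℝ} (hδ : 0 ≤ δ) :
    √(cosh (√(2 * log (1 + 4 * δ ^ 2) / m)) ^ m - 1) / 2 ≤ δ := by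
  set t := √(2 * log (1 + 4 * δ ^ 2) / m)
  have hlog : 0 ≤ 2 * log (1 + 4 * δ ^ 2) / m := by
    have := log_nonneg (by nlinarith : (1 : ℝ) ≤ 1 + 4 * δ ^ 2)
    positivity
  have hcosh : cosh t ^ m ≤ 1 + 4 * δ ^ 2 :=
    calc cosh t ^ m ≤ exp (t ^ 2 / 2) ^ m :=
          pow_le_pow_left₀ (cosh_pos t).le (cosh_le_exp_half_sq t) m
      _ = 1 + 4 * δ ^ 2 := by
        rw [← exp_nat_mul, sq_sqrt hlog, mul_div_assoc',
          mul_div_cancel₀ _ (by positivity : (m : ℝ) ≠ 0), mul_div_cancel_left₀ _ two_ne_zero,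
          exp_log (by positivity)]
  rw [div_le_iff₀ two_pos, sqrt_le_left (by positivity)]
  nlinarith

/-- The separation `ε` of the theorem, with `m = n - d`. -/
def sepRadius (m : ℝ) (n : ℕ) (δ : ℝ) : ℝ :=
  m ^ ((1 : ℝ) / 4) * (n : ℝ) ^ (-(1 : ℝ) / 2) * (2 * log (1 + 4 * δ ^ 2)) ^ ((1 : ℝ) / 4)

lemma sepRadius_lt_sqrt {m : ℕ} (hm : 0 < m) (hn : 0 < n) {δ δ' : ℝ} (hδ : 0 ≤ δ)
    (hδδ' : δ < δ') : sepRadius m n δ < √(√(2 * log (1 + 4 * δ' ^ 2) / m) * m / n) := by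
  have hm' : (0 : ℝ) < m := Nat.cast_pos.2 hm
  have hn' : (0 : ℝ) < n := Nat.cast_pos.2 hn
  have hL : 0 ≤ 2 * log (1 + 4 * δ ^ 2) := by
    have := log_nonneg (by nlinarith : (1 : ℝ) ≤ 1 + 4 * δ ^ 2)
    positivity
  have hLL' : 2 * log (1 + 4 * δ ^ 2) < 2 * log (1 + 4 * δ' ^ 2) := by gcongr
  have hquarter : ∀ x : ℝ, 0 ≤ x → (x ^ ((1 : ℝ) / 4)) ^ 4 = x := fun x hx => by
    rw [← rpow_mul_natCast hx]
    norm_num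
  have hhalf : ((n : ℝ) ^ (-(1 : ℝ) / 2)) ^ 4 = ((n : ℝ) ^ 2)⁻¹ := by
    rw [← rpow_mul_natCast hn'.le, ← rpow_natCast, ← rpow_neg hn'.le]
    norm_num
  apply lt_sqrt_of_sq_lt
  refine lt_of_pow_lt_pow_left₀ 2 (by positivity) ?_
  rw [sepRadius, ← pow_mul, mul_pow, mul_pow, hquarter _ hm'.le, hhalf, hquarter _ hL, div_pow,
    mul_pow, sq_sqrt (div_nonneg (hL.trans hLL'.le) hm'.le), lt_div_iff₀ (by positivity)]
  field_simp
  nlinarith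

theorem exists_far_gaussP_le {d : ℕ} (hd : d < n) {F : Submodule ℝ (Fin n → ℝ)}
    (hdim : Module.finrank ℝ F = d) {P : (Fin n → ℝ) →ₗ[ℝ] (Fin n → ℝ)}
    (hP : IsOrthProjOn n F P) {S : Set (Fin n → ℝ)} (hS : MeasurableSet S) {δ δ' : ℝ}
    (hδ : 0 ≤ δ) (hδδ' : δ < δ') :
    ∃ f : Fin n → ℝ, sepRadius ((n : ℝ) - d) n δ < norm2 n (f - P f) ∧
      (gaussP n f 1).real S ≤ (gaussP n 0 1).real S + δ' := by
  have hm : 0 < n - d := Nat.sub_pos_of_lt hd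
  obtain ⟨f, hfF, hff, hf⟩ :=
    exists_orthogonal_gaussP_le hdim √(√(2 * log (1 + 4 * δ' ^ 2) / (n - d : ℕ))) hS
  rw [sq_sqrt (sqrt_nonneg _)] at hff hf
  refine ⟨f, ?_, hf.trans (add_le_add_right (sqrt_cosh_pow_sub_one_le hm (hδ.trans hδδ'.le)) _)⟩
  rw [hP.apply_eq_zero hfF, sub_zero, norm2_eq_sqrt_dotProduct, hff, ← Nat.cast_sub hd.le]
  exact sepRadius_lt_sqrt hm (hm.trans_le (Nat.sub_le n d)) hδ hδδ'

end GaussianSequence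

theorem testing_lower_bound_general (n d : ℕ) (hd : d < n)
    (F : Submodule ℝ (Fin n → ℝ)) (hdim : Module.finrank ℝ F = d)
    (P : (Fin n → ℝ) →ₗ[ℝ] (Fin n → ℝ)) (hP : IsOrthProjOn n F P)
    (ξ δ : ℝ) (hδ : 0 < δ)
    (ε : ℝ)
    (hε : ε = ((n : ℝ) - d) ^ ((1 : ℝ) / 4) * (n : ℝ) ^ (-(1 : ℝ) / 2) *
      (2 * Real.log (1 + 4 * δ ^ 2)) ^ ((1 : ℝ) / 4))
    (φ : (Fin n → ℝ) → Bool) (hφ : Measurable φ)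
    (hlevel : ∀ f ∈ F, (gaussP n f 1 {y | φ y = true}).toReal ≤ ξ) :
    1 - ξ - δ ≤ sSup {r : ℝ | ∃ f : Fin n → ℝ,
      ε < norm2 n (f - P f) ∧ r = (gaussP n f 1 {y | φ y = false}).toReal} := by
  have hS : MeasurableSet {y | φ y = true} := hφ (measurableSet_singleton true)
  have hbdd : BddAbove {r : ℝ | ∃ f : Fin n → ℝ,
      ε < norm2 n (f - P f) ∧ r = (gaussP n f 1 {y | φ y = false}).toReal} := by
    refine ⟨1, ?_⟩
    rintro r ⟨f, -, rfl⟩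
    exact measureReal_le_one
  refine le_of_forall_sub_le fun e he => ?_
  obtain ⟨f, hfar, hf⟩ := exists_far_gaussP_le hd hdim hP hS hδ.le (lt_add_of_pos_right δ he)
  refine le_csSup_of_le hbdd ⟨f, hε.trans_lt hfar, rfl⟩ ?_
  have hnull : (gaussP n 0 1).real {y | φ y = true} ≤ ξ := hlevel 0 F.zero_mem
  have hcompl : {y | φ y = false} = {y | φ y = true}ᶜ := by ext; simp
  rw [← measureReal_def, hcompl, probReal_compl_eq_one_sub hS]
  linarith

/-- any level-`ξ` test of `H₀ : f ∈ F` has type II error at least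
`1 − ξ − δ` somewhere on the set `A` of alternatives at normalized distance `> ε`
from `F`, where `ε = (n−d)^{1/4}·n^{−1/2}·(2·log(1+4δ²))^{1/4}` (here `σ = 1`). -/
theorem testing_lower_bound (n d : ℕ) (hd : d < n)
    (F : Submodule ℝ (Fin n → ℝ)) (hdim : Module.finrank ℝ F = d)
    (P : (Fin n → ℝ) →ₗ[ℝ] (Fin n → ℝ)) (hP : IsOrthProjOn n F P)
    (ξ δ : ℝ) (hξ : 0 < ξ) (hδ : 0 < δ) (hδξ : δ < 1 - ξ)
    (ε : ℝ)
    (hε : ε = ((n : ℝ) - d) ^ ((1 : ℝ) / 4) * (n : ℝ) ^ (-(1 : ℝ) / 2) *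
      (2 * Real.log (1 + 4 * δ ^ 2)) ^ ((1 : ℝ) / 4))
    (φ : (Fin n → ℝ) → Bool) (hφ : Measurable φ)
    (hlevel : ∀ f ∈ F, (gaussP n f 1 {y | φ y = true}).toReal ≤ ξ) :
    1 - ξ - δ ≤ sSup {r : ℝ | ∃ f : Fin n → ℝ,
      ε < norm2 n (f - P f) ∧ r = (gaussP n f 1 {y | φ y = false}).toReal} :=
  testing_lower_bound_general n d hd F hdim P hP ξ δ hδ ε hε φ hφ hlevel
end
end

section
/- Let 0 < α < 1, σ > 0, A ⊆ ℝⁿ, and let (L,U) be a confidence band with inf_{f∈A} P_f(L ≤ f ≤ U) ≥ 1 − α. Let p ∈ {2,∞} and ε > 0. Then for every f, g ∈ A with ‖f − g‖_p ≤ ε, P_f( W ≥ ‖f − g‖_∞ ) ≥ 1 − 2α − M_p(ε, A). -/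
open MeasureTheory ProbabilityTheory Real

noncomputable section

/-- `M_p(ε, A) = sup{ d_TV(P_f, P_g) : f, g ∈ A, ‖f−g‖_p ≤ ε }`, where the
`p`-norm is supplied as the function `nrm`. -/
def Mp (n : ℕ) (σ : ℝ) (nrm : (Fin n → ℝ) → ℝ) (ε : ℝ) (A : Set (Fin n → ℝ)) : ℝ :=
  sSup {r : ℝ | ∃ f ∈ A, ∃ g ∈ A, nrm (f - g) ≤ ε ∧
    r = dTV n (gaussP n f σ) (gaussP n g σ)}


instance gaussP_isProb (n : ℕ) (f : Fin n → ℝ) (σ : ℝ) :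
    IsProbabilityMeasure (gaussP n f σ) := by
  unfold gaussP; infer_instance

lemma dTV_le_one (n : ℕ) (P Q : Measure (Fin n → ℝ))
    [IsProbabilityMeasure P] [IsProbabilityMeasure Q] : dTV n P Q ≤ 1 := by
  apply Real.iSup_le _ one_pos.le
  rintro ⟨A, hA⟩
  have h1 : (P A).toReal ≤ 1 := by
    simpa using ENNReal.toReal_mono ENNReal.one_ne_top (prob_le_one (μ := P) (s := A))
  have h2 : (Q A).toReal ≤ 1 := by
    simpa using ENNReal.toReal_mono ENNReal.one_ne_top (prob_le_one (μ := Q) (s := A))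
  rw [abs_sub_le_iff]
  constructor <;> [skip; skip] <;>
    [linarith [ENNReal.toReal_nonneg (a := Q A)]; linarith [ENNReal.toReal_nonneg (a := P A)]]

/-- if `(L,U)` is a `1−α` uniform band over `A`, `p ∈ {2,∞}` and
`f, g ∈ A` with `‖f−g‖_p ≤ ε`, then `P_f(W ≥ ‖f−g‖_∞) ≥ 1 − 2α − M_p(ε,A)`. -/
theorem width_lower_bound_Mp (n : ℕ) (hn : 1 ≤ n) (σ : ℝ) (hσ : 0 < σ)
    (α : ℝ) (hα : 0 < α) (hα1 : α < 1)
    (A : Set (Fin n → ℝ))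
    (L U : (Fin n → ℝ) → Fin n → ℝ)
    (hL : Measurable L) (hU : Measurable U) (hLU : ∀ y i, L y i ≤ U y i)
    (hcov : ∀ f ∈ A, ENNReal.ofReal (1 - α) ≤ gaussP n f σ {y | covers n L U f y})
    (nrm : (Fin n → ℝ) → ℝ) (hnrm : nrm = norm2 n ∨ nrm = normInf n)
    (ε : ℝ) (hε : 0 < ε) :
    ∀ f ∈ A, ∀ g ∈ A, nrm (f - g) ≤ ε →
      ENNReal.ofReal (1 - 2 * α - Mp n σ nrm ε A) ≤
        gaussP n f σ {y | normInf n (f - g) ≤ width n L U y} := by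
  intro f hf g hg hfg
  haveI : Nonempty (Fin n) := ⟨⟨0, hn⟩⟩
  set Pf := gaussP n f σ with hPfdef
  set Pg := gaussP n g σ with hPgdef
  have hmeas : ∀ h : Fin n → ℝ, MeasurableSet {y | covers n L U h y} := by
    intro h
    have heq : {y | covers n L U h y}
        = ⋂ i, ({y | L y i ≤ h i} ∩ {y | h i ≤ U y i}) := by
      ext y; simp [covers, Set.mem_iInter, forall_and]
    rw [heq]
    refine MeasurableSet.iInter fun i => MeasurableSet.inter ?_ ?_
    · exact measurableSet_le ((measurable_pi_apply i).comp hL) measurable_const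
    · exact measurableSet_le measurable_const ((measurable_pi_apply i).comp hU)
  set Cf := {y | covers n L U f y} with hCf
  set Cg := {y | covers n L U g y} with hCg
  -- dTV(Pf, Pg) ≤ Mp
  have hMp : dTV n Pf Pg ≤ Mp n σ nrm ε A := by
    apply le_csSup
    · refine ⟨1, ?_⟩
      rintro r ⟨f', _, g', _, _, rfl⟩
      exact dTV_le_one n _ _
    · exact ⟨f, hf, g, hg, hfg, rfl⟩
  -- |Pf Cg - Pg Cg| ≤ dTV
  have habs : |(Pf Cg).toReal - (Pg Cg).toReal| ≤ dTV n Pf Pg := by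
    have hb : BddAbove (Set.range fun A : {A : Set (Fin n → ℝ) // MeasurableSet A} =>
        |(Pf A).toReal - (Pg A).toReal|) := by
      refine ⟨2, ?_⟩
      rintro _ ⟨⟨A, hA⟩, rfl⟩
      have h1 : (Pf A).toReal ≤ 1 := by
        simpa using ENNReal.toReal_mono ENNReal.one_ne_top (prob_le_one (μ := Pf) (s := A))
      have h2 : (Pg A).toReal ≤ 1 := by
        simpa using ENNReal.toReal_mono ENNReal.one_ne_top (prob_le_one (μ := Pg) (s := A))
      rw [abs_sub_le_iff]
      constructor <;>
        [linarith [ENNReal.toReal_nonneg (a := Pg A)]; linarith [ENNReal.toReal_nonneg (a := Pf A)]]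
    exact le_ciSup hb ⟨Cg, hmeas g⟩
  have h1 : 1 - α ≤ (Pf Cf).toReal :=
    (ENNReal.ofReal_le_iff_le_toReal (measure_ne_top _ _)).mp (hcov f hf)
  have h2 : 1 - α ≤ (Pg Cg).toReal :=
    (ENNReal.ofReal_le_iff_le_toReal (measure_ne_top _ _)).mp (hcov g hg)
  have h3 : (Pg Cg).toReal - dTV n Pf Pg ≤ (Pf Cg).toReal := by
    have := abs_le.mp habs
    linarith [this.1]
  -- intersection bound
  have hun := measure_union_add_inter (μ := Pf) Cf (hmeas g)
  have hun' := congrArg ENNReal.toReal hun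
  rw [ENNReal.toReal_add (measure_ne_top _ _) (measure_ne_top _ _),
    ENNReal.toReal_add (measure_ne_top _ _) (measure_ne_top _ _)] at hun'
  have hle1 : (Pf (Cf ∪ Cg)).toReal ≤ 1 := by
    simpa using ENNReal.toReal_mono ENNReal.one_ne_top (prob_le_one (μ := Pf) (s := Cf ∪ Cg))
  have h4 : (Pf Cf).toReal + (Pf Cg).toReal - 1 ≤ (Pf (Cf ∩ Cg)).toReal := by linarith
  -- inclusion
  have hsub : Cf ∩ Cg ⊆ {y | normInf n (f - g) ≤ width n L U y} := by
    rintro y ⟨hyf, hyg⟩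
    simp only [hCf, hCg, Set.mem_setOf_eq] at hyf hyg ⊢
    unfold normInf width
    have hbdd : BddAbove (Set.range fun i => U y i - L y i) :=
      (Set.finite_range _).bddAbove
    refine ciSup_le fun i => ?_
    have hi1 := (hyf i).1
    have hi2 := (hyf i).2
    have hj1 := (hyg i).1
    have hj2 := (hyg i).2
    have habs' : |(f - g) i| ≤ U y i - L y i := by
      simp only [Pi.sub_apply]
      rw [abs_sub_le_iff]
      constructor <;> linarith
    exact habs'.trans (le_ciSup hbdd i)
  have h5 : (Pf (Cf ∩ Cg)).toReal ≤ (Pf {y | normInf n (f - g) ≤ width n L U y}).toReal :=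
    ENNReal.toReal_mono (measure_ne_top _ _) (measure_mono hsub)
  apply ENNReal.ofReal_le_of_le_toReal
  linarith

end
end

section
/- Let 0 < α < 1, σ > 0, and A = A₀ ∪ A₁ ⊆ ℝⁿ (not necessarily disjoint). Let (L,U) be a confidence band with inf_{f∈A} P_f(L ≤ f ≤ U) ≥ 1 − α, and let ε > 0 be such that there exist f ∈ A₀ and g ∈ A₁ with ‖f − g‖_∞ ≥ ε. Then sup_{f∈A₀} P_f( W ≥ ε ) ≥ 1 − 2α − m_∞(ε, A₀, A₁). -/
open MeasureTheory ProbabilityTheory Real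

noncomputable section

/-- `m_∞(ε, A₀, A₁) = inf{ d_TV(P_f, P_g) : f ∈ A₀, g ∈ A₁, ‖f−g‖_∞ ≥ ε }`. -/
def mInf (n : ℕ) (σ : ℝ) (ε : ℝ) (A₀ A₁ : Set (Fin n → ℝ)) : ℝ :=
  sInf {r : ℝ | ∃ f ∈ A₀, ∃ g ∈ A₁, ε ≤ normInf n (f - g) ∧
    r = dTV n (gaussP n f σ) (gaussP n g σ)}

instance gaussP_prob (n : ℕ) (f : Fin n → ℝ) (σ : ℝ) :
    IsProbabilityMeasure (gaussP n f σ) := by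
  unfold gaussP; infer_instance

lemma measurable_covers (n : ℕ) (L U : (Fin n → ℝ) → Fin n → ℝ)
    (hL : Measurable L) (hU : Measurable U) (g : Fin n → ℝ) :
    MeasurableSet {y | covers n L U g y} := by
  have h : {y | covers n L U g y} =
      ⋂ i, ({y | L y i ≤ g i} ∩ {y | g i ≤ U y i}) := by
    ext y; simp [covers, Set.mem_iInter, Set.mem_setOf_eq]
  rw [h]
  exact MeasurableSet.iInter fun i =>
    ((measurableSet_le ((measurable_pi_apply i).comp hL) measurable_const).inter
      (measurableSet_le measurable_const ((measurable_pi_apply i).comp hU)))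

lemma prob_toReal_le_one {α : Type*} [MeasurableSpace α] (μ : Measure α)
    [IsProbabilityMeasure μ] (A : Set α) : (μ A).toReal ≤ 1 := by
  have := prob_le_one (μ := μ) (s := A)
  calc (μ A).toReal ≤ (1 : ENNReal).toReal :=
        ENNReal.toReal_mono ENNReal.one_ne_top this
    _ = 1 := by simp

/-- if `(L,U)` is a `1−α` uniform band over `A = A₀ ∪ A₁` and some
`f ∈ A₀`, `g ∈ A₁` satisfy `‖f−g‖_∞ ≥ ε`, then
`sup_{f∈A₀} P_f(W ≥ ε) ≥ 1 − 2α − m_∞(ε, A₀, A₁)`. -/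
theorem width_lower_bound_mInf (n : ℕ) (hn : 1 ≤ n) (σ : ℝ) (hσ : 0 < σ)
    (α : ℝ) (hα : 0 < α) (hα1 : α < 1)
    (A₀ A₁ : Set (Fin n → ℝ))
    (L U : (Fin n → ℝ) → Fin n → ℝ)
    (hL : Measurable L) (hU : Measurable U) (hLU : ∀ y i, L y i ≤ U y i)
    (hcov : ∀ f ∈ A₀ ∪ A₁,
      ENNReal.ofReal (1 - α) ≤ gaussP n f σ {y | covers n L U f y})
    (ε : ℝ) (hε : 0 < ε)
    (hpair : ∃ f ∈ A₀, ∃ g ∈ A₁, ε ≤ normInf n (f - g)) :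
    1 - 2 * α - mInf n σ ε A₀ A₁ ≤
      sSup {r : ℝ | ∃ f ∈ A₀,
        r = (gaussP n f σ {y | ε ≤ width n L U y}).toReal} := by
  haveI : Nonempty (Fin n) := ⟨⟨0, hn⟩⟩
  set S := {r : ℝ | ∃ f ∈ A₀,
      r = (gaussP n f σ {y | ε ≤ width n L U y}).toReal} with hS
  set M := {r : ℝ | ∃ f ∈ A₀, ∃ g ∈ A₁, ε ≤ normInf n (f - g) ∧
      r = dTV n (gaussP n f σ) (gaussP n g σ)} with hM
  have hSbdd : BddAbove S := by
    refine ⟨1, fun r hr => ?_⟩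
    obtain ⟨f, _, rfl⟩ := hr
    exact prob_toReal_le_one _ _
  -- key per-pair bound
  have key : ∀ f ∈ A₀, ∀ g ∈ A₁, ε ≤ normInf n (f - g) →
      1 - 2 * α - dTV n (gaussP n f σ) (gaussP n g σ) ≤ sSup S := by
    intro f hf g hg hfg
    set Pf := gaussP n f σ
    set Pg := gaussP n g σ
    set Cf := {y | covers n L U f y} with hCfdef
    set Cg := {y | covers n L U g y} with hCgdef
    have hCg : MeasurableSet Cg := measurable_covers n L U hL hU g
    set d := dTV n Pf Pg with hd
    -- dTV bound
    have hdbd : |(Pf Cg).toReal - (Pg Cg).toReal| ≤ d := by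
      have hbdd : BddAbove (Set.range fun A : {A : Set (Fin n → ℝ) // MeasurableSet A} =>
          |(Pf A).toReal - (Pg A).toReal|) := by
        refine ⟨2, fun x hx => ?_⟩
        obtain ⟨A, rfl⟩ := hx
        have h1 := prob_toReal_le_one Pf (A : Set (Fin n → ℝ))
        have h2 := prob_toReal_le_one Pg (A : Set (Fin n → ℝ))
        have h3 : (0:ℝ) ≤ (Pf (A : Set (Fin n → ℝ))).toReal := ENNReal.toReal_nonneg
        have h4 : (0:ℝ) ≤ (Pg (A : Set (Fin n → ℝ))).toReal := ENNReal.toReal_nonneg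
        rw [abs_le]; constructor <;> linarith
      exact le_ciSup hbdd (⟨Cg, hCg⟩ : {A : Set (Fin n → ℝ) // MeasurableSet A})
    -- coverage bounds in reals
    have h1 : 1 - α ≤ (Pf Cf).toReal :=
      (ENNReal.ofReal_le_iff_le_toReal (measure_ne_top _ _)).mp (hcov f (Or.inl hf))
    have h2 : 1 - α ≤ (Pg Cg).toReal :=
      (ENNReal.ofReal_le_iff_le_toReal (measure_ne_top _ _)).mp (hcov g (Or.inr hg))
    have h3 : 1 - α - d ≤ (Pf Cg).toReal := by
      have := (abs_le.mp hdbd).1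
      linarith
    -- inclusion-exclusion
    have hIE : (Pf (Cf ∪ Cg)).toReal + (Pf (Cf ∩ Cg)).toReal =
        (Pf Cf).toReal + (Pf Cg).toReal := by
      have hE := measure_union_add_inter (μ := Pf) Cf hCg
      have := congrArg ENNReal.toReal hE
      rwa [ENNReal.toReal_add (measure_ne_top _ _) (measure_ne_top _ _),
        ENNReal.toReal_add (measure_ne_top _ _) (measure_ne_top _ _)] at this
    have hUnion : (Pf (Cf ∪ Cg)).toReal ≤ 1 := prob_toReal_le_one _ _
    have hInter : 1 - 2 * α - d ≤ (Pf (Cf ∩ Cg)).toReal := by linarith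
    -- inclusion into wide-width event
    have hsub : Cf ∩ Cg ⊆ {y | ε ≤ width n L U y} := by
      obtain ⟨i, hi⟩ := Finite.exists_max (fun j => |f j - g j|)
      have hni : normInf n (f - g) ≤ |f i - g i| := by
        apply ciSup_le
        intro j
        simpa using hi j
      have hεi : ε ≤ |f i - g i| := le_trans hfg hni
      intro y hy
      obtain ⟨hyf, hyg⟩ := hy
      have hf1 := (hyf i).1
      have hf2 := (hyf i).2
      have hg1 := (hyg i).1
      have hg2 := (hyg i).2
      have habs : |f i - g i| ≤ U y i - L y i := by
        rw [abs_le]; constructor <;> linarith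
      have hw : U y i - L y i ≤ width n L U y := by
        unfold width
        exact le_ciSup (f := fun j => U y j - L y j) (Set.Finite.bddAbove (Set.finite_range _)) i
      show ε ≤ width n L U y
      linarith
    have hmono : (Pf (Cf ∩ Cg)).toReal ≤ (Pf {y | ε ≤ width n L U y}).toReal :=
      ENNReal.toReal_mono (measure_ne_top _ _) (measure_mono hsub)
    have hmem : (Pf {y | ε ≤ width n L U y}).toReal ∈ S := ⟨f, hf, rfl⟩
    have := le_csSup hSbdd hmem
    linarith
  -- combine over the infimum
  obtain ⟨f₀, hf₀, g₀, hg₀, hfg₀⟩ := hpair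
  have hMne : M.Nonempty := ⟨_, f₀, hf₀, g₀, hg₀, hfg₀, rfl⟩
  have hle : 1 - 2 * α - sSup S ≤ mInf n σ ε A₀ A₁ := by
    apply le_csInf hMne
    rintro b ⟨f, hf, g, hg, hfg, rfl⟩
    have := key f hf g hg hfg
    linarith
  linarith

end
end

section
/- Let F be a linear subspace of ℝⁿ with orthogonal projection Π, let σ > 0, 0 < α < 1 and f ∈ F. Then for Y ~ P_f, P_f( max_{1≤i≤n} |(ΠY)_i − f_i| ≤ σ·Ω_F·Φ⁻¹(1 − α/(2n)) ) ≥ 1 − α. Consequently, the fixed-width band ΠY ± σ·Ω_F·Φ⁻¹(1 − α/(2n))·𝟙 (𝟙 the all-ones vector) has uniform coverage at least 1 − α over F. -/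
/-!
Because `Π` is self-adjoint and fixes `f ∈ F`, each coordinate `(ΠY)ᵢ - fᵢ = ⟨Πeᵢ, Y - f⟩`
is a centred Gaussian whose standard deviation `σ |Πeᵢ|₂` is at most `σ Ω_F` (in the
normalised norm, `‖Πeᵢ‖ / ‖eᵢ‖` is the plain Euclidean norm `|Πeᵢ|₂`). By the symmetry of
`N(0, 1)`, such a coordinate exceeds `σ Ω_F Φ⁻¹(1 - α/(2n))` in absolute value with
probability at most `α/n`, and a union bound over the `n` coordinates gives coverage `1 - α`.
-/

open MeasureTheory ProbabilityTheory Real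

noncomputable section

open Set Matrix
open scoped NNReal ENNReal

lemma continuous_cdf (μ : Measure ℝ) [IsProbabilityMeasure μ] [NullSingletonClass μ] :
    Continuous (cdf μ) := by
  refine continuous_iff_continuousAt.2 fun x => ?_
  rw [(cdf μ).mono.continuousAt_iff_leftLim_eq_rightLim, StieltjesFunction.rightLim_eq]
  have hatom := (cdf μ).measure_singleton x
  rw [measure_cdf, measure_singleton, eq_comm, ENNReal.ofReal_eq_zero] at hatom
  linarith [(cdf μ).mono.leftLim_le le_rfl (x := x)]

lemma stdCDF_eq_cdf : stdCDF = cdf (gaussianReal 0 1) := by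
  ext x
  rw [cdf_eq_real, measureReal_def, stdCDF]

instance nullSingletonClass_gaussianReal_zero_one : NullSingletonClass (gaussianReal 0 1) :=
  nullSingletonClass_gaussianReal one_ne_zero

lemma stdCDF_PhiInv {p : ℝ} (hp0 : 0 < p) (hp1 : p < 1) : stdCDF (PhiInv p) = p := by
  refine Function.invFun_eq ?_
  rw [stdCDF_eq_cdf]
  exact mem_range_of_exists_le_of_exists_ge (continuous_cdf _)
    ((tendsto_cdf_atBot _).eventually (eventually_le_nhds hp0)).exists
    ((tendsto_cdf_atTop _).eventually (eventually_ge_nhds hp1)).exists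

lemma gaussianReal_zero_one_Iic_neg (q : ℝ) :
    gaussianReal 0 1 (Iic (-q)) = gaussianReal 0 1 (Ioi q) := by
  have hsymm := gaussianReal_map_neg (μ := 0) (v := 1)
  rw [neg_zero] at hsymm
  rw [measure_congr Ioi_ae_eq_Ici]
  conv_lhs => rw [← hsymm, Measure.map_apply measurable_neg measurableSet_Iic]
  congr 1
  ext x
  simp

lemma gaussianReal_zero_one_Ioi (q : ℝ) :
    gaussianReal 0 1 (Ioi q) = 1 - ENNReal.ofReal (stdCDF q) := by
  rw [← compl_Iic, prob_compl_eq_one_sub measurableSet_Iic, stdCDF_eq_cdf, ofReal_cdf]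

lemma gaussianReal_zero_one_Ioi_PhiInv_one_sub {ε : ℝ} (hε0 : 0 < ε) (hε1 : ε < 1) :
    gaussianReal 0 1 (Ioi (PhiInv (1 - ε))) = ENNReal.ofReal ε := by
  rw [gaussianReal_zero_one_Ioi, stdCDF_PhiInv (by linarith) (by linarith), ← ENNReal.ofReal_one,
    ← ENNReal.ofReal_sub _ (by linarith), sub_sub_cancel]

lemma stdCDF_zero : stdCDF 0 = 1 / 2 := by
  have h := measure_add_measure_compl (μ := gaussianReal 0 1) (measurableSet_Iic (a := 0))
  rw [compl_Iic, ← gaussianReal_zero_one_Iic_neg, neg_zero, measure_univ, ← ofReal_cdf,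
    ← ENNReal.ofReal_add (cdf_nonneg _ _) (cdf_nonneg _ _), ENNReal.ofReal_eq_one] at h
  rw [stdCDF_eq_cdf]
  linarith

lemma PhiInv_nonneg {p : ℝ} (hp0 : 1 / 2 < p) (hp1 : p < 1) : 0 ≤ PhiInv p := by
  by_contra! hneg
  have hmono := stdCDF_eq_cdf ▸ monotone_cdf (gaussianReal 0 1) hneg.le
  rw [stdCDF_zero, stdCDF_PhiInv (by linarith) hp1] at hmono
  linarith

lemma gaussianReal_zero_one_abs_gt_le (q : ℝ) :
    gaussianReal 0 1 {z | q < |z|} ≤ 2 * gaussianReal 0 1 (Ioi q) :=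
  calc gaussianReal 0 1 {z | q < |z|} ≤ gaussianReal 0 1 (Iic (-q) ∪ Ioi q) :=
        measure_mono fun z (hz : q < |z|) => by
          rcases lt_abs.mp hz with h | h
          · exact Or.inr h
          · exact Or.inl (by simp only [mem_Iic]; linarith)
    _ ≤ gaussianReal 0 1 (Iic (-q)) + gaussianReal 0 1 (Ioi q) := measure_union_le _ _
    _ = 2 * gaussianReal 0 1 (Ioi q) := by rw [gaussianReal_zero_one_Iic_neg, two_mul]

lemma gaussianReal_eq_map_gaussianReal_zero_one (m : ℝ) (v : ℝ≥0) :
    gaussianReal m v = (gaussianReal 0 1).map (fun z => √v * z + m) := by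
  rw [show (fun z => √v * z + m) = (· + m) ∘ (√v * ·) from rfl,
    ← Measure.map_map (measurable_add_const m) (measurable_const_mul _),
    gaussianReal_map_const_mul, gaussianReal_map_add_const, mul_zero, zero_add]
  congr
  ext
  simp

lemma gaussianReal_abs_sub_gt_le (m : ℝ) (v : ℝ≥0) {c q : ℝ} (hc : √v * q ≤ c) :
    gaussianReal m v {t | c < |t - m|} ≤ 2 * gaussianReal 0 1 (Ioi q) := by
  rw [gaussianReal_eq_map_gaussianReal_zero_one,
    Measure.map_apply (by fun_prop) (measurableSet_lt measurable_const (by fun_prop))]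
  refine (measure_mono fun z hz => ?_).trans (gaussianReal_zero_one_abs_gt_le q)
  simp only [mem_preimage, mem_ofPred_eq, add_sub_cancel_right, abs_mul,
    abs_of_nonneg (Real.sqrt_nonneg _)] at hz
  exact lt_of_mul_lt_mul_left (hc.trans_lt hz) (Real.sqrt_nonneg _)

lemma ProbabilityTheory.iIndepFun.map_finsetSum_eq_gaussianReal {Ω ι : Type*}
    {mΩ : MeasurableSpace Ω} {μ : Measure Ω} [IsProbabilityMeasure μ] {X : ι → Ω → ℝ}
    (hind : iIndepFun X μ)
    (hmeas : ∀ i, Measurable (X i)) {m : ι → ℝ} {v : ι → ℝ≥0}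
    (hX : ∀ i, μ.map (X i) = gaussianReal (m i) (v i)) (s : Finset ι) :
    μ.map (∑ i ∈ s, X i) = gaussianReal (∑ i ∈ s, m i) (∑ i ∈ s, v i) := by
  classical
  induction s using Finset.induction_on with
  | empty =>
    rw [Finset.sum_empty, Finset.sum_empty, Finset.sum_empty, gaussianReal_zero_var,
      show (0 : Ω → ℝ) = fun _ => 0 from rfl, Measure.map_const, measure_univ, one_smul]
  | insert i s hi ih =>
    rw [Finset.sum_insert hi, Finset.sum_insert hi, Finset.sum_insert hi]
    exact gaussianReal_add_gaussianReal_of_indepFun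
      (hind.indepFun_finsetSum_of_notMem hmeas hi).symm (hX i) ih

lemma map_dotProduct_pi_gaussianReal {ι : Type*} [Fintype ι] (a m : ι → ℝ) (v : ℝ≥0) :
    (Measure.pi fun i => gaussianReal (m i) v).map (a ⬝ᵥ ·) =
      gaussianReal (a ⬝ᵥ m) ((∑ i, a i ^ 2).toNNReal * v) := by
  have hind : iIndepFun (fun i (y : ι → ℝ) => a i * y i)
      (Measure.pi fun i => gaussianReal (m i) v) :=
    iIndepFun_pi (X := fun i x => a i * x) fun i => by fun_prop
  have hlaw (i : ι) : (Measure.pi fun i => gaussianReal (m i) v).map (fun y => a i * y i) =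
      gaussianReal (a i * m i) ((a i ^ 2).toNNReal * v) := by
    calc _ = ((Measure.pi fun i => gaussianReal (m i) v).map (Function.eval i)).map (a i * ·) :=
          (Measure.map_map (measurable_const_mul _) (measurable_pi_apply i)).symm
      _ = _ := by
        rw [(measurePreserving_eval _ i).map_eq, gaussianReal_map_const_mul,
          Real.toNNReal_of_nonneg (sq_nonneg _)]
  have hsum := hind.map_finsetSum_eq_gaussianReal (fun i => by fun_prop) hlaw Finset.univ
  convert hsum using 2
  · ext y
    simp [dotProduct]
  · rfl
  · rw [Real.toNNReal_sum_of_nonneg fun i _ => sq_nonneg (a i), Finset.sum_mul]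

namespace IsOrthProjOn

variable {n : ℕ} {F : Submodule ℝ (Fin n → ℝ)} {P : (Fin n → ℝ) →ₗ[ℝ] (Fin n → ℝ)}

lemma sub_dotProduct_eq_zero (hP : IsOrthProjOn n F P) (hn : n ≠ 0) (u : Fin n → ℝ)
    {g : Fin n → ℝ} (hg : g ∈ F) : (u - P u) ⬝ᵥ g = 0 := by
  have h := hP.2 u g hg
  rwa [inner2, div_eq_zero_iff, or_iff_left (Nat.cast_ne_zero.2 hn)] at h

lemma apply_of_mem (hP : IsOrthProjOn n F P) (hn : n ≠ 0) {g : Fin n → ℝ} (hg : g ∈ F) :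
    P g = g := by
  have h := hP.sub_dotProduct_eq_zero hn g (F.sub_mem hg (hP.1 g))
  rw [dotProduct_self_eq_zero, sub_eq_zero] at h
  exact h.symm

lemma apply_dotProduct (hP : IsOrthProjOn n F P) (hn : n ≠ 0) (u w : Fin n → ℝ) :
    P u ⬝ᵥ w = u ⬝ᵥ P w := by
  have hu := hP.sub_dotProduct_eq_zero hn u (hP.1 w)
  have hw := hP.sub_dotProduct_eq_zero hn w (hP.1 u)
  rw [sub_dotProduct, sub_eq_zero] at hu hw
  rw [dotProduct_comm, hw, hu, dotProduct_comm]

lemma apply_eq_dotProduct (hP : IsOrthProjOn n F P) (hn : n ≠ 0) (y : Fin n → ℝ) (i : Fin n) :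
    P y i = P (Pi.single i 1) ⬝ᵥ y := by
  rw [dotProduct_comm, ← hP.apply_dotProduct hn, dotProduct_single, mul_one]

end IsOrthProjOn

lemma norm2_eq (n : ℕ) (v : Fin n → ℝ) : norm2 n v = √(∑ i, v i ^ 2) / √n :=
  Real.sqrt_div' _ (Nat.cast_nonneg n)

lemma sqrt_sum_sq_le_OmegaF {n : ℕ} (P : (Fin n → ℝ) →ₗ[ℝ] (Fin n → ℝ)) (hn : n ≠ 0)
    (i : Fin n) : √(∑ j, P (Pi.single i 1) j ^ 2) ≤ OmegaF n P := by
  have hratio : norm2 n (P (Pi.single i 1)) / norm2 n (Pi.single i 1) =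
      √(∑ j, P (Pi.single i 1) j ^ 2) := by
    have hsqrt : √(n : ℝ) ≠ 0 := by positivity
    simp [norm2_eq, Pi.single_apply, hsqrt]
  rw [← hratio, OmegaF]
  exact le_ciSup (f := fun j : Fin n => norm2 n (P (Pi.single j 1)) / norm2 n (Pi.single j 1))
    (Finite.bddAbove_range _) i

instance isProbabilityMeasure_gaussP (n : ℕ) (f : Fin n → ℝ) (σ : ℝ) :
    IsProbabilityMeasure (gaussP n f σ) := by
  unfold gaussP
  infer_instance

lemma gaussP_abs_proj_sub_gt_le {n : ℕ} {F : Submodule ℝ (Fin n → ℝ)}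
    {P : (Fin n → ℝ) →ₗ[ℝ] (Fin n → ℝ)} (hP : IsOrthProjOn n F P) (hn : n ≠ 0) {σ : ℝ}
    (hσ : 0 ≤ σ) {f : Fin n → ℝ} (hf : f ∈ F) {q : ℝ} (hq : 0 ≤ q) (i : Fin n) :
    gaussP n f σ {y | σ * OmegaF n P * q < |P y i - f i|} ≤ 2 * gaussianReal 0 1 (Ioi q) := by
  set a := P (Pi.single i 1)
  have hset : {y | σ * OmegaF n P * q < |P y i - f i|} =
      (a ⬝ᵥ ·) ⁻¹' {t | σ * OmegaF n P * q < |t - a ⬝ᵥ f|} := by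
    have hmean : a ⬝ᵥ f = f i := by rw [← hP.apply_eq_dotProduct hn, hP.apply_of_mem hn hf]
    ext y
    simp only [mem_ofPred_eq, mem_preimage, hP.apply_eq_dotProduct hn y i, hmean]
    rfl
  rw [hset, gaussP, ← Measure.map_apply (by fun_prop)
    (measurableSet_lt measurable_const (by fun_prop)), map_dotProduct_pi_gaussianReal]
  apply gaussianReal_abs_sub_gt_le
  have hsd : √(↑((∑ j, a j ^ 2).toNNReal * (σ ^ 2).toNNReal)) = σ * √(∑ j, a j ^ 2) := by
    rw [NNReal.coe_mul, Real.coe_toNNReal _ (by positivity), Real.coe_toNNReal _ (sq_nonneg σ),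
      Real.sqrt_mul' _ (sq_nonneg σ), Real.sqrt_sq hσ, mul_comm]
  rw [hsd]
  gcongr
  exact sqrt_sum_sq_le_OmegaF P hn i

lemma one_sub_card_mul_le_prob_iInter {Ω ι : Type*} [MeasurableSpace Ω] [Fintype ι]
    {μ : Measure Ω} [IsProbabilityMeasure μ] (s : ι → Set Ω) {ε : ℝ≥0∞}
    (hs : ∀ i, μ (s i)ᶜ ≤ ε) : 1 - Fintype.card ι * ε ≤ μ (⋂ i, s i) := by
  rw [tsub_le_iff_right]
  calc 1 = μ univ := measure_univ.symm
    _ ≤ μ (⋂ i, s i) + μ (⋂ i, s i)ᶜ := measure_univ_le_add_compl _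
    _ ≤ μ (⋂ i, s i) + Fintype.card ι * ε := by
      gcongr
      rw [compl_iInter]
      refine (measure_iUnion_fintype_le _ _).trans ?_
      exact (Finset.sum_le_sum fun i _ => hs i).trans_eq (by simp)

/-- the projection band `ΠY ± σ·Ω_F·Φ⁻¹(1−α/(2n))` has coverage at
least `1 − α` uniformly over `f ∈ F`. -/
theorem projection_band_coverage (n : ℕ) (hn : 1 ≤ n) (σ : ℝ) (hσ : 0 < σ)
    (α : ℝ) (hα : 0 < α) (hα1 : α < 1)
    (F : Submodule ℝ (Fin n → ℝ))
    (P : (Fin n → ℝ) →ₗ[ℝ] (Fin n → ℝ)) (hP : IsOrthProjOn n F P)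
    (f : Fin n → ℝ) (hf : f ∈ F) :
    ENNReal.ofReal (1 - α) ≤
      gaussP n f σ
        {y | ∀ i, |P y i - f i| ≤ σ * OmegaF n P * PhiInv (1 - α / (2 * n))} := by
  have hn0 : n ≠ 0 := Nat.one_le_iff_ne_zero.mp hn
  have hε : 0 < α / (2 * n) := by positivity
  have hε' : α / (2 * n) < 1 / 2 := by
    rw [div_lt_iff₀ (by positivity)]
    linarith [(Nat.one_le_cast.mpr hn : (1 : ℝ) ≤ n)]
  have hq : 0 ≤ PhiInv (1 - α / (2 * n)) := PhiInv_nonneg (by linarith) (by linarith)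
  have hcoord (i : Fin n) :
      gaussP n f σ {y | |P y i - f i| ≤ σ * OmegaF n P * PhiInv (1 - α / (2 * n))}ᶜ ≤
        2 * ENNReal.ofReal (α / (2 * n)) := by
    simpa only [compl_ofPred, not_le, gaussianReal_zero_one_Ioi_PhiInv_one_sub hε (by linarith)]
      using gaussP_abs_proj_sub_gt_le hP hn0 hσ.le hf hq i
  calc ENNReal.ofReal (1 - α)
        = 1 - Fintype.card (Fin n) * (2 * ENNReal.ofReal (α / (2 * n))) := by
        rw [Fintype.card_fin, ← ENNReal.ofReal_natCast, ← ENNReal.ofReal_ofNat 2,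
          ← ENNReal.ofReal_mul zero_le_two, ← ENNReal.ofReal_mul n.cast_nonneg,
          ENNReal.ofReal_sub _ hα.le, ENNReal.ofReal_one]
        congr 2
        field_simp
    _ ≤ _ := by
      rw [ofPred_forall]
      exact one_sub_card_mul_le_prob_iInter _ hcoord

end
end
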